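/- For each integer p ≥ 3, let W_p ⊆ [0,1]² be the union of the segments conv((0,1),(0,0)), conv((0,0),(2/p,1/p)), conv((2/p,1/p),(1/(p−1),0)), and conv((1/(p−1),0),(1,0)), and let L = ({0} × [0,1]) ∪ ([0,1] × {0}). Then for every integer p ≥ 3 the map ρ(x,y) = (max(x−y,0), max(y−x,0)) restricted to W_p is a Z-homeomorphism of W_p onto L. -/

import Mathlib

open Set MeasureTheory

/-- The unit cube `[0,1]^n` in `ℝ^n`. -/
def cubeSet (n : ℕ) : Set (Fin n → ℝ) := Set.Icc 0 1

/-- A point all of whose coordinates are rational. -/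
def IsRationalPoint {n : ℕ} (v : Fin n → ℝ) : Prop := ∀ i, ∃ q : ℚ, v i = (q : ℝ)

/-- A rational polyhedron: a finite union of convex hulls of finite sets of rational points. -/
def IsRationalPolyhedron {n : ℕ} (P : Set (Fin n → ℝ)) : Prop :=
  ∃ S : Finset (Finset (Fin n → ℝ)),
    (∀ F ∈ S, ∀ v ∈ F, IsRationalPoint v) ∧
    P = ⋃ F ∈ S, convexHull ℝ (F : Set (Fin n → ℝ))

/-- An affine map `x ↦ Mx + b` with integer matrix `M` and integer vector `b`. -/
def IsIntAffine {n m : ℕ} (g : (Fin n → ℝ) → (Fin m → ℝ)) : Prop :=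
  ∃ (M : Fin m → Fin n → ℤ) (b : Fin m → ℤ),
    ∀ x i, g x i = (∑ j, (M i j : ℝ) * x j) + (b i : ℝ)

/-- A Z-map on `P`: continuous on `P`, with finitely many integer affine pieces. -/
def IsZMapOn {n m : ℕ} (P : Set (Fin n → ℝ)) (f : (Fin n → ℝ) → (Fin m → ℝ)) : Prop :=
  ContinuousOn f P ∧
  ∃ (k : ℕ) (g : Fin k → (Fin n → ℝ) → (Fin m → ℝ)),
    (∀ i, IsIntAffine (g i)) ∧ ∀ x ∈ P, ∃ i, f x = g i x

/-- `f` restricted to `P` is a Z-homeomorphism of `P` onto `Q`. -/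
def IsZHomeoOnto {n m : ℕ} (P : Set (Fin n → ℝ)) (Q : Set (Fin m → ℝ))
    (f : (Fin n → ℝ) → (Fin m → ℝ)) : Prop :=
  IsZMapOn P f ∧ f '' P = Q ∧ Set.InjOn f P ∧
  ∃ g : (Fin m → ℝ) → (Fin n → ℝ),
    IsZMapOn Q g ∧ (∀ x ∈ P, g (f x) = x) ∧ (∀ y ∈ Q, f (g y) = y)

/-- A Z-retraction of the cube `[0,1]^n`. -/
def IsZRetraction {n : ℕ} (σ : (Fin n → ℝ) → (Fin n → ℝ)) : Prop :=
  IsZMapOn (cubeSet n) σ ∧ Set.MapsTo σ (cubeSet n) (cubeSet n) ∧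
  ∀ x ∈ cubeSet n, σ (σ x) = σ x

/-- The range `R_σ = σ([0,1]^n)` of a Z-retraction. -/
def zRange {n : ℕ} (σ : (Fin n → ℝ) → (Fin n → ℝ)) : Set (Fin n → ℝ) := σ '' cubeSet n

/-- A Z-homeomorphism domain for `σ`: a rational polyhedron `Q ⊆ [0,1]^n` such that
`σ` restricted to `Q` is a Z-homeomorphism of `Q` onto `R_σ`. -/
def IsZHomeoDomain {n : ℕ} (σ : (Fin n → ℝ) → (Fin n → ℝ)) (Q : Set (Fin n → ℝ)) : Prop :=
  IsRationalPolyhedron Q ∧ Q ⊆ cubeSet n ∧ IsZHomeoOnto Q (zRange σ) σ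

/-- A (Kuratowski) closed domain: `D` equals the closure of its interior. -/
def IsClosedDomain {n : ℕ} (D : Set (Fin n → ℝ)) : Prop :=
  closure (interior D) = D

/-- A scalar integer affine map. -/
def IsIntAffine1 {n : ℕ} (g : (Fin n → ℝ) → ℝ) : Prop :=
  ∃ (m : Fin n → ℤ) (b : ℤ), ∀ x, g x = (∑ j, (m j : ℝ) * x j) + (b : ℝ)

/-- A scalar Z-map on `P`. -/
def IsZMapOn1 {n : ℕ} (P : Set (Fin n → ℝ)) (f : (Fin n → ℝ) → ℝ) : Prop :=
  ContinuousOn f P ∧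
  ∃ (k : ℕ) (g : Fin k → (Fin n → ℝ) → ℝ),
    (∀ i, IsIntAffine1 (g i)) ∧ ∀ x ∈ P, ∃ i, f x = g i x

/-- The free MV-algebra `McN([0,1]^n)`, viewed as a set of functions on the cube. -/
def McN (n : ℕ) : Set (↥(cubeSet n) → ℝ) :=
  { f | (∀ x, f x ∈ Set.Icc (0:ℝ) 1) ∧
    ∃ g : (Fin n → ℝ) → ℝ, IsZMapOn1 (cubeSet n) g ∧ ∀ x : ↥(cubeSet n), f x = g x.1 }

/-- Pointwise MV-sum `f ⊕ g = min(f + g, 1)`. -/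
def mvAdd {X : Type*} (f g : X → ℝ) : X → ℝ := fun x => min (f x + g x) 1

/-- Pointwise MV-negation `¬f = 1 - f`. -/
def mvNeg {X : Type*} (f : X → ℝ) : X → ℝ := fun x => 1 - f x

/-- The retract `A_σ = {g ∘ σ : g ∈ McN([0,1]^n)}` associated with a Z-retraction `σ`. -/
def retAlg {n : ℕ} (σ : (Fin n → ℝ) → (Fin n → ℝ)) : Set (↥(cubeSet n) → ℝ) :=
  { f | ∃ g ∈ McN n, ∀ (x : ↥(cubeSet n)) (h : σ x.1 ∈ cubeSet n), f x = g ⟨σ x.1, h⟩ }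

/-- `ε` is a retraction of `McN([0,1]^n)` onto `A`. -/
def IsMcNRetraction {n : ℕ} (ε : ↥(McN n) → ↥(McN n)) (A : Set (↥(cubeSet n) → ℝ)) : Prop :=
  (∀ (f g : ↥(McN n)) (h : mvAdd f.1 g.1 ∈ McN n),
      (ε ⟨mvAdd f.1 g.1, h⟩).1 = mvAdd (ε f).1 (ε g).1) ∧
  (∀ (f : ↥(McN n)) (h : mvNeg f.1 ∈ McN n),
      (ε ⟨mvNeg f.1, h⟩).1 = mvNeg (ε f).1) ∧
  (∀ f, ε (ε f) = ε f) ∧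
  Subtype.val '' Set.range ε = A

/-- An MV-isomorphism between two sets of `[0,1]`-valued functions. -/
def IsMVIsoFun {X Y : Type*} (A : Set (X → ℝ)) (B : Set (Y → ℝ)) (h : ↥A → ↥B) : Prop :=
  Function.Bijective h ∧
  (∀ (f g : ↥A) (hm : mvAdd f.1 g.1 ∈ A),
      (h ⟨mvAdd f.1 g.1, hm⟩).1 = mvAdd (h f).1 (h g).1) ∧
  (∀ (f : ↥A) (hm : mvNeg f.1 ∈ A),
      (h ⟨mvNeg f.1, hm⟩).1 = mvNeg (h f).1)

/-- `ρ(x,y) = (max(x-y,0), max(y-x,0))`. -/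
def rho11 : (Fin 2 → ℝ) → (Fin 2 → ℝ) := fun v => ![max (v 0 - v 1) 0, max (v 1 - v 0) 0]

/-- `L = ({0} × [0,1]) ∪ ([0,1] × {0})`. -/
def Lset : Set (Fin 2 → ℝ) :=
  {v | (v 0 = 0 ∧ 0 ≤ v 1 ∧ v 1 ≤ 1) ∨ (v 1 = 0 ∧ 0 ≤ v 0 ∧ v 0 ≤ 1)}

/-- The broken line `W_p`. -/
def Wline (p : ℕ) : Set (Fin 2 → ℝ) :=
  segment ℝ ![0, 1] ![0, 0] ∪
  segment ℝ ![0, 0] ![2 / (p : ℝ), 1 / (p : ℝ)] ∪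
  segment ℝ ![2 / (p : ℝ), 1 / (p : ℝ)] ![1 / ((p : ℝ) - 1), 0] ∪
  segment ℝ ![1 / ((p : ℝ) - 1), 0] ![1, 0]

/-! The inverse of `ρ` on `L` is the map `gmap p`, written with `min` and `max` so that it is
visibly a Z-map: Z-maps are closed under `min`, `max`, sums and pairing of coordinates. It is the
identity on the vertical arm of `L`, and on the horizontal arm it sends `(u, 0)` to `(2u, u)`,
`(1 - (p-2)u, 1 - (p-1)u)` and `(u, 0)` on `[0, 1/p]`, `[1/p, 1/(p-1)]` and `[1/(p-1), 1]`. Being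
affine on each of these pieces, it maps `L` onto the four segments of `W_p`, and `ρ ∘ gmap p = id`
on `L` by direct computation; this is all a Z-homeomorphism needs. -/

section ZMap

variable {n : ℕ} {P : Set (Fin n → ℝ)} {f f₁ f₂ : (Fin n → ℝ) → ℝ}

lemma IsIntAffine1.continuous (hf : IsIntAffine1 f) : Continuous f := by
  obtain ⟨m, b, hf⟩ := hf
  rw [funext hf]
  fun_prop

lemma IsIntAffine1.add (h₁ : IsIntAffine1 f₁) (h₂ : IsIntAffine1 f₂) :
    IsIntAffine1 (fun x => f₁ x + f₂ x) := by
  obtain ⟨m₁, b₁, h₁⟩ := h₁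
  obtain ⟨m₂, b₂, h₂⟩ := h₂
  refine ⟨m₁ + m₂, b₁ + b₂, fun x => ?_⟩
  simp only [h₁, h₂, Pi.add_apply, Int.cast_add, add_mul, Finset.sum_add_distrib]
  ring

lemma IsIntAffine1.pair (h₁ : IsIntAffine1 f₁) (h₂ : IsIntAffine1 f₂) :
    IsIntAffine (fun x => ![f₁ x, f₂ x]) := by
  obtain ⟨m₁, b₁, h₁⟩ := h₁
  obtain ⟨m₂, b₂, h₂⟩ := h₂
  refine ⟨![m₁, m₂], ![b₁, b₂], fun x i => ?_⟩
  fin_cases i <;> simp [h₁, h₂]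

lemma IsIntAffine1.isZMapOn1 (hf : IsIntAffine1 f) : IsZMapOn1 P f :=
  ⟨hf.continuous.continuousOn, 1, fun _ => f, fun _ => hf, fun _ _ => ⟨0, rfl⟩⟩

lemma IsZMapOn1.of_forall_eq_or (hf : ContinuousOn f P) (h₁ : IsZMapOn1 P f₁)
    (h₂ : IsZMapOn1 P f₂) (h : ∀ x ∈ P, f x = f₁ x ∨ f x = f₂ x) : IsZMapOn1 P f := by
  obtain ⟨-, k₁, g₁, hg₁, hf₁⟩ := h₁
  obtain ⟨-, k₂, g₂, hg₂, hf₂⟩ := h₂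
  refine ⟨hf, k₁ + k₂, Fin.append g₁ g₂, Fin.addCases (by simpa) (by simpa), fun x hx => ?_⟩
  rcases h x hx with h | h
  · obtain ⟨i, hi⟩ := hf₁ x hx
    exact ⟨Fin.castAdd k₂ i, by simp [h, hi]⟩
  · obtain ⟨j, hj⟩ := hf₂ x hx
    exact ⟨Fin.natAdd k₁ j, by simp [h, hj]⟩

lemma IsZMapOn1.min (h₁ : IsZMapOn1 P f₁) (h₂ : IsZMapOn1 P f₂) :
    IsZMapOn1 P (fun x => min (f₁ x) (f₂ x)) :=
  .of_forall_eq_or (h₁.1.inf h₂.1) h₁ h₂ fun _ _ => min_choice _ _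

lemma IsZMapOn1.max (h₁ : IsZMapOn1 P f₁) (h₂ : IsZMapOn1 P f₂) :
    IsZMapOn1 P (fun x => max (f₁ x) (f₂ x)) :=
  .of_forall_eq_or (h₁.1.sup h₂.1) h₁ h₂ fun _ _ => max_choice _ _

lemma IsZMapOn1.add (h₁ : IsZMapOn1 P f₁) (h₂ : IsZMapOn1 P f₂) :
    IsZMapOn1 P (fun x => f₁ x + f₂ x) := by
  obtain ⟨hc₁, k₁, g₁, hg₁, hf₁⟩ := h₁
  obtain ⟨hc₂, k₂, g₂, hg₂, hf₂⟩ := h₂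
  refine ⟨hc₁.add hc₂, k₁ * k₂, fun l x => g₁ (finProdFinEquiv.symm l).1 x +
    g₂ (finProdFinEquiv.symm l).2 x, fun l => (hg₁ _).add (hg₂ _), fun x hx => ?_⟩
  obtain ⟨i, hi⟩ := hf₁ x hx
  obtain ⟨j, hj⟩ := hf₂ x hx
  exact ⟨finProdFinEquiv (i, j), by simp [hi, hj]⟩

lemma IsZMapOn1.pair (h₁ : IsZMapOn1 P f₁) (h₂ : IsZMapOn1 P f₂) :
    IsZMapOn P (fun x => ![f₁ x, f₂ x]) := by
  obtain ⟨hc₁, k₁, g₁, hg₁, hf₁⟩ := h₁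
  obtain ⟨hc₂, k₂, g₂, hg₂, hf₂⟩ := h₂
  refine ⟨continuousOn_pi.2 fun i => ?_, k₁ * k₂, fun l x => ![g₁ (finProdFinEquiv.symm l).1 x,
    g₂ (finProdFinEquiv.symm l).2 x], fun l => (hg₁ _).pair (hg₂ _), fun x hx => ?_⟩
  · fin_cases i
    exacts [hc₁, hc₂]
  · obtain ⟨i, hi⟩ := hf₁ x hx
    obtain ⟨j, hj⟩ := hf₂ x hx
    exact ⟨finProdFinEquiv (i, j), by simp [hi, hj]⟩

end ZMap

lemma isIntAffine1_fin_two (a b c : ℤ) :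
    IsIntAffine1 (fun x : Fin 2 → ℝ => a * x 0 + b * x 1 + c) :=
  ⟨![a, b], c, fun x => by simp [Fin.sum_univ_two]⟩

lemma isZHomeoOnto_of_image_eq_of_leftInvOn {n m : ℕ} {P : Set (Fin n → ℝ)}
    {Q : Set (Fin m → ℝ)} {f : (Fin n → ℝ) → (Fin m → ℝ)} {g : (Fin m → ℝ) → (Fin n → ℝ)}
    (hf : IsZMapOn P f) (hg : IsZMapOn Q g) (hP : g '' Q = P) (hfg : LeftInvOn f g Q) :
    IsZHomeoOnto P Q f := by
  subst hP
  exact ⟨hf, hfg.image_image, LeftInvOn.injOn hfg.rightInvOn_image, g, hg,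
    hfg.rightInvOn_image, hfg⟩

lemma rho11_isZMapOn (S : Set (Fin 2 → ℝ)) : IsZMapOn S rho11 := by
  have aff := fun a b c => (isIntAffine1_fin_two a b c).isZMapOn1 (P := S)
  convert ((aff 1 (-1) 0).max (aff 0 0 0)).pair ((aff (-1) 1 0).max (aff 0 0 0)) using 1
  funext x
  simp [rho11, sub_eq_add_neg, add_comm]

lemma rho11_vertical {v : ℝ} (hv : 0 ≤ v) : rho11 ![0, v] = ![0, v] := by
  simp [rho11, hv]

lemma rho11_of_le {a b : ℝ} (h : b ≤ a) : rho11 ![a, b] = ![a - b, 0] := by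
  simp [rho11, h]

def gmap (p : ℕ) : (Fin 2 → ℝ) → (Fin 2 → ℝ) := fun w =>
  ![min (2 * w 0) (max (1 - ((p : ℝ) - 2) * w 0) (w 0)),
    max (min (w 0) (1 - ((p : ℝ) - 1) * w 0)) 0 + w 1]

lemma gmap_isZMapOn (p : ℕ) (S : Set (Fin 2 → ℝ)) : IsZMapOn S (gmap p) := by
  have aff := fun a b c => (isIntAffine1_fin_two a b c).isZMapOn1 (P := S)
  convert ((aff 2 0 0).min ((aff (2 - p) 0 1).max (aff 1 0 0))).pair
    ((((aff 1 0 0).min (aff (1 - p) 0 1)).max (aff 0 0 0)).add (aff 0 1 0)) using 1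
  funext x
  simp only [gmap]
  push_cast
  ring_nf

section gmap

variable (p : ℕ) {u : ℝ}

lemma gmap_vertical (v : ℝ) : gmap p ![0, v] = ![0, v] := by
  simp [gmap]

lemma gmap_horizontal_of_mul_le_one (h₀ : 0 ≤ u) (h : p * u ≤ 1) :
    gmap p ![u, 0] = ![2 * u, u] := by
  simp only [gmap, Matrix.cons_val_zero, Matrix.cons_val_one]
  rw [max_eq_left (by linarith), min_eq_left (by linarith), min_eq_left (by linarith),
    max_eq_left h₀, add_zero]

lemma gmap_horizontal_of_one_le_mul (h₁ : 1 ≤ p * u) (h₂ : (p - 1) * u ≤ 1) :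
    gmap p ![u, 0] = ![1 - (p - 2) * u, 1 - (p - 1) * u] := by
  simp only [gmap, Matrix.cons_val_zero, Matrix.cons_val_one]
  rw [max_eq_left (by linarith), min_eq_right (by linarith), min_eq_right (by linarith),
    max_eq_left (by linarith), add_zero]

lemma gmap_horizontal_of_one_le_sub_one_mul (h₀ : 0 ≤ u) (h : 1 ≤ (p - 1) * u) :
    gmap p ![u, 0] = ![u, 0] := by
  simp only [gmap, Matrix.cons_val_zero, Matrix.cons_val_one]
  rw [max_eq_right (by linarith), min_eq_right (by linarith), min_eq_right (by linarith),
    max_eq_right (by linarith), add_zero]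

end gmap

lemma Lset_eq_image_union :
    Lset = (fun v => ![0, v]) '' Icc 0 1 ∪ (fun u => ![u, 0]) '' Icc 0 1 := by
  ext y
  simp only [Lset, mem_ofPred_eq, mem_union, mem_image, mem_Icc]
  constructor
  · rintro (⟨h, hy⟩ | ⟨h, hy⟩)
    · exact Or.inl ⟨y 1, hy, by ext i; fin_cases i <;> simp [h]⟩
    · exact Or.inr ⟨y 0, hy, by ext i; fin_cases i <;> simp [h]⟩
  · rintro (⟨v, hv, rfl⟩ | ⟨u, hu, rfl⟩)
    · simp [hv]
    · simp [hu]

lemma leftInvOn_rho11_gmap (p : ℕ) : LeftInvOn rho11 (gmap p) Lset := by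
  rw [Lset_eq_image_union]
  rintro _ (⟨v, ⟨hv, -⟩, rfl⟩ | ⟨u, ⟨hu, -⟩, rfl⟩)
  · rw [gmap_vertical, rho11_vertical hv]
  rcases le_total (p * u) 1 with h₁ | h₁
  · rw [gmap_horizontal_of_mul_le_one p hu h₁, rho11_of_le (by linarith)]
    ring_nf
  rcases le_total ((p - 1) * u) 1 with h₂ | h₂
  · rw [gmap_horizontal_of_one_le_mul p h₁ h₂, rho11_of_le (by linarith)]
    ring_nf
  · rw [gmap_horizontal_of_one_le_sub_one_mul p hu h₂, rho11_of_le hu, sub_zero]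

lemma image_Icc_eq_segment_of_eqOn {E : Type*} [AddCommGroup E] [Module ℝ E] {f : ℝ → E}
    {a b : ℝ} (hab : a ≤ b) (v w : E) (hf : EqOn f (fun u => v + u • w) (Icc a b)) :
    f '' Icc a b = segment ℝ (f a) (f b) := by
  have hline : (fun u : ℝ => v + u • w) = AffineMap.lineMap v (v + w) := by
    funext u
    simp [AffineMap.lineMap_apply_module', add_comm]
  rw [hf.image_eq, hf (left_mem_Icc.2 hab), hf (right_mem_Icc.2 hab), hline,
    ← segment_eq_Icc hab, image_segment]

lemma gmap_image_vertical (p : ℕ) :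
    gmap p '' ((fun v => ![0, v]) '' Icc 0 1) = segment ℝ ![0, 1] ![0, 0] := by
  rw [image_image, image_Icc_eq_segment_of_eqOn zero_le_one 0 ![0, 1], segment_symm]
  · simp [gmap_vertical]
  · intro v _
    simp [gmap_vertical]

lemma gmap_image_horizontal {p : ℕ} (hp : 3 ≤ p) :
    gmap p '' ((fun u => ![u, 0]) '' Icc 0 1) =
      segment ℝ ![0, 0] ![2 / (p : ℝ), 1 / (p : ℝ)] ∪
      segment ℝ ![2 / (p : ℝ), 1 / (p : ℝ)] ![1 / ((p : ℝ) - 1), 0] ∪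
      segment ℝ ![1 / ((p : ℝ) - 1), 0] ![1, 0] := by
  have hp' : (3 : ℝ) ≤ p := by exact_mod_cast hp
  have hp₀ : (0 : ℝ) < p := by linarith
  have hp₁ : (0 : ℝ) < p - 1 := by linarith
  have h₁ : (0 : ℝ) ≤ 1 / p := by positivity
  have h₂ : 1 / (p : ℝ) ≤ 1 / (p - 1) := one_div_le_one_div_of_le hp₁ (by linarith)
  have h₃ : 1 / ((p : ℝ) - 1) ≤ 1 := (div_le_one hp₁).2 (by linarith)
  have e₀ : gmap p ![0, 0] = ![0, 0] := gmap_vertical p 0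
  have e₁ : gmap p ![1 / (p : ℝ), 0] = ![2 / (p : ℝ), 1 / (p : ℝ)] := by
    rw [gmap_horizontal_of_mul_le_one p h₁ (mul_one_div_cancel hp₀.ne').le, mul_one_div]
  have e₂ : gmap p ![1 / ((p : ℝ) - 1), 0] = ![1 / ((p : ℝ) - 1), 0] :=
    gmap_horizontal_of_one_le_sub_one_mul p (h₁.trans h₂) (mul_one_div_cancel hp₁.ne').ge
  have e₃ : gmap p ![1, 0] = ![1, 0] :=
    gmap_horizontal_of_one_le_sub_one_mul p zero_le_one (by linarith)
  rw [← Icc_union_Icc_eq_Icc (h₁.trans h₂) h₃, ← Icc_union_Icc_eq_Icc h₁ h₂, image_union,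
    image_union, image_union, image_union, image_image, image_image, image_image,
    image_Icc_eq_segment_of_eqOn h₁ 0 ![2, 1],
    image_Icc_eq_segment_of_eqOn h₂ ![1, 1] ![2 - (p : ℝ), 1 - p],
    image_Icc_eq_segment_of_eqOn h₃ 0 ![1, 0], e₀, e₁, e₂, e₃]
  · rintro u ⟨hu, -⟩
    dsimp only
    rw [gmap_horizontal_of_one_le_sub_one_mul p (h₁.trans (h₂.trans hu))
      ((div_le_iff₀' hp₁).1 hu)]
    simp
  · rintro u ⟨hu₁, hu₂⟩
    dsimp only
    rw [gmap_horizontal_of_one_le_mul p ((div_le_iff₀' hp₀).1 hu₁) ((le_div_iff₀' hp₁).1 hu₂)]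
    ext i
    fin_cases i <;> simp <;> ring
  · rintro u ⟨hu₁, hu₂⟩
    dsimp only
    rw [gmap_horizontal_of_mul_le_one p hu₁ ((le_div_iff₀' hp₀).1 hu₂)]
    ext i
    fin_cases i <;> simp [mul_comm]

lemma gmap_image_Lset {p : ℕ} (hp : 3 ≤ p) : gmap p '' Lset = Wline p := by
  rw [Lset_eq_image_union, image_union, gmap_image_vertical, gmap_image_horizontal hp, Wline]
  simp only [union_assoc]

/-- For every integer `p ≥ 3`, the map `ρ` restricted to `W_p` is a
Z-homeomorphism of `W_p` onto `L`. -/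
theorem stmt12 (p : ℕ) (hp : 3 ≤ p) : IsZHomeoOnto (Wline p) Lset rho11 :=
  isZHomeoOnto_of_image_eq_of_leftInvOn (rho11_isZMapOn _) (gmap_isZMapOn p _)
    (gmap_image_Lset hp) (leftInvOn_rho11_gmap p)
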